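/- arXiv:1902.00504 — 7 statements merged into one kernel-verified Lean document; each statement's English description precedes it below -/
import Mathlib

section
/- Let A → R be a flat ring homomorphism of commutative Noetherian rings. Then every associated prime of R (as an R-module) is an associated prime of R/pR for some associated prime p of A (as an A-module). In particular, Ass_R(R) ⊆ ⋃_{p ∈ Ass_A(A)} Ass_R(R/pR). -/
/-!
Let `q = √(0 : x)` be an associated prime of `R` and `p = q ∩ A`. By the equational criterion, an
element of a flat `A`-module killed by a finitely generated ideal `I` lies in `(0 : I) • ⊤`.
Since `p` is associated to the `A`-module `R`, it is `(0 : y)` for some `y`; with `I = p` this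
makes `p` the annihilator of the finite module `(0 : p)`, hence minimal in its support and so
associated to `(0 : p) ⊆ A`. With `I = pⁿ ⊆ (0 : x)` it puts `x` into `(0 : pⁿ) R ≅ R ⊗_A (0 : pⁿ)`,
so `q` is associated to `R ⊗_A N` for a finite module `N` supported in `V(p)`. Along a prime
filtration of `N`, flatness gives `q ∈ Ass(R/PR)` for some `P ⊇ p`, and `PR ⊆ q` forces `P = p`.
-/

open TensorProduct

theorem Module.Flat.mem_annihilator_smul_top {A M : Type*} [CommRing A] [AddCommGroup M]
    [Module A M] [Module.Flat A M] {I : Ideal A} (hI : I.FG) {x : M}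
    (hx : ∀ a ∈ I, a • x = 0) : x ∈ I.annihilator • (⊤ : Submodule A M) := by
  have : Module.FinitePresentation A (A ⧸ I) :=
    Module.finitePresentation_of_surjective I.mkQ I.mkQ_surjective (by rwa [I.ker_mkQ])
  obtain ⟨k, g, h, hgh⟩ := Module.Flat.exists_factorization_of_finitePresentation
    (I.liftQ (LinearMap.toSpanSingleton A M x) fun a ha ↦ by simpa using hx a ha)
  set v := g (Submodule.Quotient.mk 1)
  have hv : ∀ j, v j ∈ I.annihilator := fun j ↦
    Submodule.mem_annihilator.mpr fun a ha ↦ by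
      rw [smul_eq_mul, mul_comm, ← smul_eq_mul, ← Finsupp.smul_apply, ← map_smul,
        ← Submodule.Quotient.mk_smul, smul_eq_mul, mul_one,
        (Submodule.Quotient.mk_eq_zero I).mpr ha, map_zero, Finsupp.zero_apply]
  have hxv : x = h v := by
    have := congr($hgh (Submodule.Quotient.mk 1))
    rwa [LinearMap.comp_apply, Submodule.liftQ_apply, LinearMap.toSpanSingleton_apply,
      one_smul] at this
  rw [hxv, ← Finsupp.univ_sum_single v, map_sum]
  refine Submodule.sum_mem _ fun j _ ↦ ?_
  rw [← Finsupp.smul_single_one, map_smul]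
  exact Submodule.smul_mem_smul (hv j) trivial

theorem Ideal.annihilator_le_annihilator_smul_top {A M : Type*} [CommRing A] [AddCommGroup M]
    [Module A M] (I : Ideal A) :
    Module.annihilator A I ≤ (I • (⊤ : Submodule A M)).annihilator := by
  intro s hs
  rw [Submodule.mem_annihilator]
  intro x hx
  refine Submodule.smul_induction_on hx (fun r hr m _ ↦ ?_) fun x y hx hy ↦ ?_
  · have : s * r = 0 := congr($(Module.mem_annihilator.mp hs ⟨r, hr⟩).1)
    rw [smul_smul, this, zero_smul]
  · rw [smul_add, hx, hy, add_zero]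

theorem Ideal.le_annihilator_annihilator {A : Type*} [CommRing A] (I : Ideal A) :
    I ≤ Module.annihilator A I.annihilator := fun a ha ↦
  Module.mem_annihilator.mpr fun c ↦
    Subtype.ext (by simpa [mul_comm] using Submodule.mem_annihilator.mp c.2 a ha)

theorem Submodule.comap_colon_bot_singleton {A R M : Type*} [CommSemiring A] [CommSemiring R]
    [Algebra A R] [AddCommMonoid M] [Module R M] [Module A M] [IsScalarTower A R M] (x : M) :
    ((⊥ : Submodule R M).colon {x}).comap (algebraMap A R) = (⊥ : Submodule A M).colon {x} := by
  ext a
  simp [Submodule.mem_colon_singleton, algebraMap_smul]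

theorem IsAssociatedPrime.comap {A R M : Type*} [CommSemiring A] [CommSemiring R] [Algebra A R]
    [AddCommMonoid M] [Module R M] [Module A M] [IsScalarTower A R M] {q : Ideal R}
    (h : IsAssociatedPrime q M) : IsAssociatedPrime (q.comap (algebraMap A R)) M := by
  obtain ⟨hq, x, rfl⟩ := h
  exact ⟨hq.comap _, x, by rw [Ideal.comap_radical, Submodule.comap_colon_bot_singleton]⟩

theorem Module.Flat.associatedPrimes_subset {A M : Type*} [CommRing A] [IsNoetherianRing A]
    [AddCommGroup M] [Module A M] [Module.Flat A M] :
    associatedPrimes A M ⊆ associatedPrimes A A := by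
  intro p hp
  obtain ⟨hp, x, rfl⟩ := isAssociatedPrime_iff.mp hp
  set p := (⊥ : Submodule A M).colon {x}
  let J := p.annihilator
  have hxJ : x ∈ J • (⊤ : Submodule A M) := Module.Flat.mem_annihilator_smul_top
    (IsNoetherian.noetherian p) fun a ha ↦ by simpa [p, Submodule.mem_colon_singleton] using ha
  have hJ : Module.annihilator A J = p := by
    refine le_antisymm (fun s hs ↦ ?_) p.le_annihilator_annihilator
    rw [Submodule.mem_colon_singleton, Submodule.mem_bot]
    exact Submodule.mem_annihilator.mp (J.annihilator_le_annihilator_smul_top hs) x hxJ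
  have : p ∈ associatedPrimes A J :=
    Module.associatedPrimes.minimalPrimes_annihilator_subset_associatedPrimes A J
      (by rw [hJ, Ideal.minimalPrimes_eq_subsingleton_self]; rfl)
  exact associatedPrimes.subset_of_injective J.injective_subtype this

section BaseChange

variable {A R : Type*} [CommRing A] [CommRing R] [Algebra A R]

theorem Ideal.exists_baseChange_subtype_eq (I : Ideal A) {x : R}
    (hx : x ∈ I • (⊤ : Submodule A R)) :
    ∃ ξ : R ⊗[A] I, AlgebraTensorModule.rid A R R (I.subtype.baseChange R ξ) = x := by
  refine Submodule.smul_induction_on hx (fun a ha r _ ↦ ⟨r ⊗ₜ ⟨a, ha⟩, ?_⟩) ?_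
  · simp
  · rintro _ _ ⟨ξ, rfl⟩ ⟨η, rfl⟩
    exact ⟨ξ + η, by simp⟩

variable [Module.Flat A R]

theorem Module.Flat.mem_associatedPrimes_baseChange_of_mem_smul_top (J : Ideal A) {q : Ideal R}
    {x : R} (hq : q.IsPrime) (hx : q = ((⊥ : Submodule R R).colon {x}).radical)
    (hxJ : x ∈ J • (⊤ : Submodule A R)) : q ∈ associatedPrimes R (R ⊗[A] J) := by
  obtain ⟨ξ, rfl⟩ := J.exists_baseChange_subtype_eq hxJ
  have hφ : Function.Injective
      ((AlgebraTensorModule.rid A R R).toLinearMap ∘ₗ J.subtype.baseChange R) := by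
    rw [LinearMap.coe_comp, LinearMap.baseChange_eq_ltensor]
    exact (AlgebraTensorModule.rid A R R).injective.comp
      (Module.Flat.lTensor_preserves_injective_linearMap _ J.injective_subtype)
  refine ⟨hq, ξ, ?_⟩
  rw [hx]
  congr 1
  ext r
  simp only [Submodule.mem_colon_singleton, Submodule.mem_bot]
  rw [← hφ.eq_iff, map_smul, map_zero]
  rfl

theorem Module.Flat.associatedPrimes_baseChange_subset [IsNoetherianRing A] (N : Type*)
    [AddCommGroup N] [Module A N] [Module.Finite A N] :
    associatedPrimes R (R ⊗[A] N) ⊆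
      ⋃ P ∈ Module.support A N, associatedPrimes R (R ⧸ P.asIdeal.map (algebraMap A R)) := by
  induction ‹Module.Finite A N› using
    IsNoetherianRing.induction_on_isQuotientEquivQuotientPrime A with
  | subsingleton N => simp [associatedPrimes.eq_empty_of_subsingleton]
  | quotient N P e =>
    intro q hq
    refine Set.mem_biUnion (x := P) ?_ ?_
    · rw [Module.mem_support_iff_of_finite, e.annihilator_eq, Ideal.annihilator_quotient]
    · rwa [← LinearEquiv.AssociatedPrimes.eq ((LinearEquiv.baseChange A R _ _ e).trans
        (Algebra.TensorProduct.quotIdealMapEquivTensorQuot R P.asIdeal).toLinearEquiv.symm)]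
  | exact N₁ N₂ N₃ f g hf hg hfg ih₁ ih₃ =>
    intro q hq
    have hf' : Function.Injective (f.baseChange R) := by
      rw [LinearMap.baseChange_eq_ltensor]
      exact Module.Flat.lTensor_preserves_injective_linearMap f hf
    have hfg' : Function.Exact (f.baseChange R) (g.baseChange R) := by
      rw [LinearMap.baseChange_eq_ltensor, LinearMap.baseChange_eq_ltensor]
      exact _root_.lTensor_exact R hfg hg
    rw [Module.support_of_exact hfg hf hg, Set.biUnion_union]
    exact Set.union_subset_union ih₁ ih₃ (associatedPrimes.subset_union_of_exact hf' hfg' hq)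

theorem Module.Flat.mem_associatedPrimes_quotient_map_comap [IsNoetherianRing A] {q : Ideal R}
    (hq : q ∈ associatedPrimes R R) :
    q ∈ associatedPrimes R (R ⧸ (q.comap (algebraMap A R)).map (algebraMap A R)) := by
  obtain ⟨hq, x, hx⟩ := hq
  set p := q.comap (algebraMap A R) with hp
  -- `q` is only the radical of `(0 : x)`, so a power of `p` is what kills `x`.
  obtain ⟨n, hn⟩ : ∃ n, p ^ n ≤ (⊥ : Submodule A R).colon {x} :=
    Ideal.exists_pow_le_of_le_radical_of_fg
      (by rw [hp, hx, Ideal.comap_radical, Submodule.comap_colon_bot_singleton])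
      (IsNoetherian.noetherian p)
  have hxJ : x ∈ (p ^ n).annihilator • (⊤ : Submodule A R) :=
    Module.Flat.mem_annihilator_smul_top (IsNoetherian.noetherian (p ^ n)) fun a ha ↦
      (Submodule.mem_bot A).mp (Submodule.mem_colon_singleton.mp (hn ha))
  have hqJ := mem_associatedPrimes_baseChange_of_mem_smul_top _ hq hx hxJ
  obtain ⟨P, hPJ, hqP⟩ := Set.mem_iUnion₂.mp (associatedPrimes_baseChange_subset _ hqJ)
  have hpP : p ≤ P.asIdeal := P.2.le_of_pow_le
    ((p ^ n).le_annihilator_annihilator.trans (Module.annihilator_le_of_mem_support hPJ))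
  have hPp : P.asIdeal ≤ p := by
    rw [← Ideal.map_le_iff_le_comap]
    simpa [Submodule.annihilator_top, Ideal.annihilator_quotient] using
      IsAssociatedPrime.annihilator_le hqP
  rwa [le_antisymm hPp hpP] at hqP

end BaseChange

theorem associatedPrimes_of_flat_general
    (A R : Type*) [CommRing A] [CommRing R]
    [IsNoetherianRing A]
    [Algebra A R] [Module.Flat A R] :
    ∀ q ∈ associatedPrimes R R, ∃ p ∈ associatedPrimes A A,
      q ∈ associatedPrimes R (R ⧸ Ideal.map (algebraMap A R) p) := fun _ hq ↦
  ⟨_, Module.Flat.associatedPrimes_subset (IsAssociatedPrime.comap hq),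
    Module.Flat.mem_associatedPrimes_quotient_map_comap hq⟩

/-- If `A → R` is a flat homomorphism of commutative Noetherian rings, then every
associated prime of `R` (as an `R`-module) is an associated prime of `R/pR` for some associated
prime `p` of `A`. -/
theorem associatedPrimes_of_flat
    (A R : Type*) [CommRing A] [CommRing R]
    [IsNoetherianRing A] [IsNoetherianRing R]
    [Algebra A R] [Module.Flat A R] :
    ∀ q ∈ associatedPrimes R R, ∃ p ∈ associatedPrimes A A,
      q ∈ associatedPrimes R (R ⧸ Ideal.map (algebraMap A R) p) :=
  associatedPrimes_of_flat_general A R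
end

section
/- Let A → R be a flat ring homomorphism of commutative Noetherian rings and a ∈ R. If for every prime ideal p of A the image of a in R/pR is not a zero divisor on R/pR, then a is not a zero divisor on R. -/
/-!
Noetherian induction on the ideal `I` of `A` for the property "`a` is regular on `R ⧸ I R`".
A maximal counterexample `I` is proper and, by hypothesis, not prime, so some `x, y ∉ I` have
`x y ∈ I`; then `I` is strictly smaller than both `I : x` and `I + (x)`. By flatness,
`(I : x) R = I R : x`, so `0 → R ⧸ (I : x) R → R ⧸ I R → R ⧸ (I + (x)) R` (the first map being
multiplication by `x`) is exact, and regularity on the outer terms passes to the middle one.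
-/

open TensorProduct

section

variable {A R : Type*} [CommRing A] [CommRing R]

theorem Ideal.isSMulRegular_quotient_iff_mk_mem_nonZeroDivisors {K : Ideal R} {a : R} :
    IsSMulRegular (R ⧸ K) a ↔ Ideal.Quotient.mk K a ∈ nonZeroDivisors (R ⧸ K) := by
  rw [isSMulRegular_quotient_iff_mem_of_smul_mem, mem_nonZeroDivisors_iff_right,
    Ideal.Quotient.mk_surjective.forall]
  simp only [← map_mul, Ideal.Quotient.eq_zero_iff_mem, smul_eq_mul, mul_comm]

theorem isSMulRegular_quotient_of_colon_of_sup {K : Ideal R} {a : R} (x : R)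
    (hcolon : IsSMulRegular (R ⧸ K.colon {x}) a)
    (hsup : IsSMulRegular (R ⧸ (K ⊔ Ideal.span {x})) a) : IsSMulRegular (R ⧸ K) a := by
  rw [isSMulRegular_quotient_iff_mem_of_smul_mem] at *
  intro r hr
  obtain ⟨m, hm, _, hsx, rfl⟩ := Submodule.mem_sup.1 (hsup r (Ideal.mem_sup_left hr))
  obtain ⟨s, rfl⟩ := Ideal.mem_span_singleton'.1 hsx
  have has : a * s ∈ K.colon {x} := by
    rw [Submodule.mem_colon_singleton, smul_eq_mul]
    simpa [mul_add, ← mul_assoc] using K.sub_mem hr (K.mul_mem_left a hm)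
  exact K.add_mem hm (Submodule.mem_colon_singleton.1 (hcolon s has))

theorem IsNoetherianRing.induction_on_isPrime_of_colon_sup [IsNoetherianRing A]
    {P : Ideal A → Prop} (top : P ⊤) (isPrime : ∀ p : Ideal A, p.IsPrime → P p)
    (colon_sup : ∀ (I : Ideal A) (x : A), P (I.colon {x}) → P (I ⊔ Ideal.span {x}) → P I)
    (I : Ideal A) : P I := by
  induction I using IsNoetherian.induction with
  | hgt I ih =>
  by_cases hI : Ideal.IsPrime I
  · exact isPrime I hI
  rcases eq_or_ne I ⊤ with rfl | hItop
  · exact top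
  obtain ⟨x, y, hxy, hx, hy⟩ : ∃ x y, x * y ∈ I ∧ x ∉ I ∧ y ∉ I := by
    simpa [Ideal.isPrime_iff, hItop] using hI
  refine colon_sup I x (ih _ ?_) (ih _ ?_)
  · exact SetLike.lt_iff_le_and_exists.2
      ⟨Ideal.le_colon, y, Submodule.mem_colon_singleton.2 (by rwa [smul_eq_mul, mul_comm]), hy⟩
  · exact SetLike.lt_iff_le_and_exists.2
      ⟨le_sup_left, x, Ideal.mem_sup_right (Ideal.mem_span_singleton_self x), hx⟩

/-- The inclusion `≥` is the content: multiplication by `x` embeds `A ⧸ (I : x)` into `A ⧸ I`,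
and tensoring with the flat module `R` keeps it injective. -/
theorem Ideal.map_colon_singleton_of_flat [Algebra A R] [Module.Flat A R] (I : Ideal A) (x : A) :
    (I.colon {x}).map (algebraMap A R) = (I.map (algebraMap A R)).colon {algebraMap A R x} := by
  refine le_antisymm (Ideal.map_le_iff_le_comap.2 fun y hy => ?_) fun r hr => ?_
  · rw [Ideal.mem_comap, Submodule.mem_colon_singleton, smul_eq_mul, ← map_mul]
    exact Ideal.mem_map_of_mem _ (Submodule.mem_colon_singleton.1 hy)
  set J := I.colon {x}
  have hker : J = LinearMap.ker (I.mkQ ∘ₗ LinearMap.lsmul A A x) := by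
    ext y
    simp only [J, LinearMap.mem_ker, LinearMap.comp_apply, LinearMap.lsmul_apply,
      Submodule.mkQ_apply, Submodule.Quotient.mk_eq_zero, Submodule.mem_colon_singleton,
      smul_eq_mul, mul_comm]
  let mulX : (A ⧸ J) →ₗ[A] A ⧸ I := J.liftQ _ hker.le
  have mulX_injective : Function.Injective mulX :=
    LinearMap.ker_eq_bot.1 (Submodule.ker_liftQ_eq_bot' _ _ hker)
  have mulX_one : mulX 1 = Ideal.Quotient.mk I x := by
    change mulX (Submodule.Quotient.mk 1) = _
    rw [Submodule.liftQ_apply]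
    simp
  let mulXR : (R ⧸ J • (⊤ : Submodule A R)) →ₗ[A] R ⧸ I • (⊤ : Submodule A R) :=
    (quotTensorEquivQuotSMul R I).toLinearMap ∘ₗ mulX.rTensor R ∘ₗ
      (quotTensorEquivQuotSMul R J).symm.toLinearMap
  have mulXR_injective : Function.Injective mulXR :=
    (quotTensorEquivQuotSMul R I).injective.comp <|
      (Module.Flat.rTensor_preserves_injective_linearMap mulX mulX_injective).comp
        (quotTensorEquivQuotSMul R J).symm.injective
  have mulXR_mk (s : R) : mulXR (Submodule.Quotient.mk s) = Submodule.Quotient.mk (x • s) := by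
    simp only [mulXR, LinearMap.coe_comp, LinearEquiv.coe_coe, Function.comp_apply,
      quotTensorEquivQuotSMul_symm_mk, LinearMap.rTensor_tmul, mulX_one]
    exact quotTensorEquivQuotSMul_mk_tmul I x s
  have hrJ : r ∈ J • (⊤ : Submodule A R) := by
    rw [← Submodule.Quotient.mk_eq_zero]
    refine mulXR_injective ?_
    rw [mulXR_mk, map_zero, Submodule.Quotient.mk_eq_zero, Ideal.smul_top_eq_map, Algebra.smul_def]
    simpa [Submodule.mem_colon_singleton, mul_comm] using hr
  rwa [Ideal.smul_top_eq_map] at hrJ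

end

theorem nonZeroDivisor_of_fiberwise_nonZeroDivisor_general
    (A R : Type*) [CommRing A] [CommRing R]
    [IsNoetherianRing A]
    [Algebra A R] [Module.Flat A R] (a : R)
    (h : ∀ p : Ideal A, p.IsPrime →
      Ideal.Quotient.mk (Ideal.map (algebraMap A R) p) a ∈
        nonZeroDivisors (R ⧸ Ideal.map (algebraMap A R) p)) :
    a ∈ nonZeroDivisors R := by
  have regular (I : Ideal A) : IsSMulRegular (R ⧸ I.map (algebraMap A R)) a := by
    induction I using IsNoetherianRing.induction_on_isPrime_of_colon_sup with
    | top =>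
      rw [Ideal.map_top]
      exact Function.injective_of_subsingleton _
    | isPrime p hp => exact Ideal.isSMulRegular_quotient_iff_mk_mem_nonZeroDivisors.2 (h p hp)
    | colon_sup I x hcolon hsup =>
      rw [Ideal.map_colon_singleton_of_flat] at hcolon
      rw [Ideal.map_sup, Ideal.map_span, Set.image_singleton] at hsup
      exact isSMulRegular_quotient_of_colon_of_sup _ hcolon hsup
  have hbot := regular ⊥
  rw [Ideal.map_bot, isSMulRegular_quotient_iff_mem_of_smul_mem] at hbot
  refine mem_nonZeroDivisors_iff_right.2 fun r hr => ?_
  simpa using hbot r (by simpa [mul_comm] using hr)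

/-- If `A → R` is a flat homomorphism of commutative Noetherian rings and `a : R`
is such that for every prime `p` of `A` the image of `a` in `R/pR` is a non-zerodivisor, then
`a` is a non-zerodivisor in `R`. -/
theorem nonZeroDivisor_of_fiberwise_nonZeroDivisor
    (A R : Type*) [CommRing A] [CommRing R]
    [IsNoetherianRing A] [IsNoetherianRing R]
    [Algebra A R] [Module.Flat A R] (a : R)
    (h : ∀ p : Ideal A, p.IsPrime →
      Ideal.Quotient.mk (Ideal.map (algebraMap A R) p) a ∈
        nonZeroDivisors (R ⧸ Ideal.map (algebraMap A R) p)) :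
    a ∈ nonZeroDivisors R :=
  nonZeroDivisor_of_fiberwise_nonZeroDivisor_general A R a h
end

section
/- Let R be a commutative ring, f : A' → B' and g : B → B' homomorphisms of R-algebras with A = A' ×_{B'} B their fiber product. Assume B' is flat as an R-module and the map B × A' → B', (b, a') ↦ g(b) − f(a'), is surjective. Then for any R-algebra S, the natural map A ⊗_R S → (A' ⊗_R S) ×_{B' ⊗_R S} (B ⊗_R S) is an isomorphism. -/
/-!
The fiber product is the kernel of `B × A' → B'`, `(b, a') ↦ g b - f a'`, so the hypotheses say
that `0 → A → B × A' → B' → 0` is exact. Since `B'` is flat, this sequence stays exact after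
`- ⊗[R] S` (flatness of the cokernel gives injectivity on the left), and `- ⊗[R] S` commutes with
the finite product `B × A'`; the tensored sequence then says exactly that `A ⊗ S` is the fiber
product of `B ⊗ S` and `A' ⊗ S` over `B' ⊗ S`.
-/

open TensorProduct

namespace LinearMap

variable {R M N₁ N₂ P : Type*} [CommRing R] [AddCommGroup M] [AddCommGroup N₁] [AddCommGroup N₂]
  [AddCommGroup P] [Module R M] [Module R N₁] [Module R N₂] [Module R P]

theorem exact_prod_coprod_neg_iff (p₁ : M →ₗ[R] N₁) (p₂ : M →ₗ[R] N₂) (g : N₁ →ₗ[R] P)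
    (f : N₂ →ₗ[R] P) :
    Function.Exact (p₁.prod p₂) (g.coprod (-f)) ↔
      ∀ x : N₁ × N₂, g x.1 = f x.2 ↔ ∃ y, (p₁ y, p₂ y) = x := by
  simp only [Function.Exact, coprod_apply, neg_apply, ← sub_eq_add_neg, sub_eq_zero,
    Set.mem_range, prod_apply]
  rfl

theorem rTensor_injective_of_exact_of_flat {N : Type*} [AddCommGroup N] [Module R N]
    [Module.Flat R P] {i : M →ₗ[R] N} {q : N →ₗ[R] P} (hi : Function.Injective i)
    (hq : Function.Surjective q) (H : Function.Exact i q) (S : Type*) [AddCommGroup S]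
    [Module R S] : Function.Injective (i.rTensor S) := by
  rw [← comm_comp_lTensor_comp_comm_eq]
  simpa using lTensor_injective_of_exact_of_flat q hq i hi H S

variable (S : Type*) [AddCommGroup S] [Module R S]

theorem prodLeft_comp_rTensor_prod (p₁ : M →ₗ[R] N₁) (p₂ : M →ₗ[R] N₂) :
    TensorProduct.prodLeft R R N₁ N₂ S ∘ₗ (p₁.prod p₂).rTensor S =
      (p₁.rTensor S).prod (p₂.rTensor S) :=
  TensorProduct.ext' fun _ _ => rfl

theorem rTensor_coprod_comp_prodLeft_symm (g : N₁ →ₗ[R] P) (f : N₂ →ₗ[R] P) :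
    (g.coprod f).rTensor S ∘ₗ (TensorProduct.prodLeft R R N₁ N₂ S).symm.toLinearMap =
      (g.rTensor S).coprod (f.rTensor S) := by
  rw [LinearEquiv.comp_toLinearMap_symm_eq]
  exact TensorProduct.ext' fun _ _ => add_tmul _ _ _

theorem rTensor_prod_injective_and_exact_of_flat [Module.Flat R P] {p₁ : M →ₗ[R] N₁}
    {p₂ : M →ₗ[R] N₂} {g : N₁ →ₗ[R] P} {f : N₂ →ₗ[R] P} (hinj : Function.Injective (p₁.prod p₂))
    (hsurj : Function.Surjective (g.coprod (-f)))
    (hexact : Function.Exact (p₁.prod p₂) (g.coprod (-f))) :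
    Function.Injective ((p₁.rTensor S).prod (p₂.rTensor S)) ∧
      Function.Exact ((p₁.rTensor S).prod (p₂.rTensor S))
        ((g.rTensor S).coprod (-f.rTensor S)) := by
  rw [← prodLeft_comp_rTensor_prod, ← rTensor_neg, ← rTensor_coprod_comp_prodLeft_symm,
    LinearEquiv.conj_exact_iff_exact]
  refine ⟨?_, rTensor_exact S hexact hsurj⟩
  rw [coe_comp]
  exact (LinearEquiv.injective _).comp (rTensor_injective_of_exact_of_flat hinj hsurj hexact S)

end LinearMap

/-- With `A = A' ×_{B'} B` the fiber product of `R`-algebras, `B'` flat over `R`,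
and `(b, a') ↦ g b - f a'` surjective, for any `R`-algebra `S` the natural map
`A ⊗_R S → (A' ⊗_R S) ×_{B' ⊗_R S} (B ⊗_R S)` is an isomorphism, i.e. the base-changed map
`A ⊗ S → (B ⊗ S) × (A' ⊗ S)` is injective with image exactly the fiber product. -/
theorem fiber_product_base_change
    (R A' B B' A S : Type*) [CommRing R]
    [CommRing A'] [CommRing B] [CommRing B'] [CommRing A] [CommRing S]
    [Algebra R A'] [Algebra R B] [Algebra R B'] [Algebra R A] [Algebra R S]
    (f : A' →ₐ[R] B') (g : B →ₐ[R] B')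
    (p₁ : A →ₐ[R] B) (p₂ : A →ₐ[R] A')
    (hcomm : ∀ a : A, g (p₁ a) = f (p₂ a))
    (hfib : ∀ (b : B) (a' : A'), g b = f a' → ∃! a : A, p₁ a = b ∧ p₂ a = a')
    [Module.Flat R B']
    (hsurj : Function.Surjective (fun x : B × A' => g x.1 - f x.2)) :
    Function.Injective (fun x : A ⊗[R] S =>
      (Algebra.TensorProduct.map p₁ (AlgHom.id R S) x,
       Algebra.TensorProduct.map p₂ (AlgHom.id R S) x)) ∧
    (∀ x : (B ⊗[R] S) × (A' ⊗[R] S),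
      Algebra.TensorProduct.map g (AlgHom.id R S) x.1 =
        Algebra.TensorProduct.map f (AlgHom.id R S) x.2 ↔
      ∃ y : A ⊗[R] S,
        (Algebra.TensorProduct.map p₁ (AlgHom.id R S) y,
         Algebra.TensorProduct.map p₂ (AlgHom.id R S) y) = x) := by
  have hinj : Function.Injective (p₁.toLinearMap.prod p₂.toLinearMap) := fun a a' h =>
    (hfib _ _ (hcomm a)).unique ⟨rfl, rfl⟩ (Prod.ext_iff.mp h.symm)
  have hexact : Function.Exact (p₁.toLinearMap.prod p₂.toLinearMap)
      (g.toLinearMap.coprod (-f.toLinearMap)) :=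
    (LinearMap.exact_prod_coprod_neg_iff _ _ _ _).mpr fun x =>
      ⟨fun h => (hfib x.1 x.2 h).exists.imp fun _ ha => Prod.ext ha.1 ha.2,
        by rintro ⟨a, rfl⟩; exact hcomm a⟩
  have hsurj' : Function.Surjective (g.toLinearMap.coprod (-f.toLinearMap)) := by
    convert hsurj using 1
    ext x
    simp [sub_eq_add_neg]
  obtain ⟨hinjS, hexactS⟩ :=
    LinearMap.rTensor_prod_injective_and_exact_of_flat S hinj hsurj' hexact
  exact ⟨hinjS, (LinearMap.exact_prod_coprod_neg_iff _ _ _ _).mp hexactS⟩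
end

section
/- Let R be a commutative ring, f : A' → B' and g : B → B' homomorphisms of R-algebras with A = A' ×_{B'} B their fiber product. Assume B' is flat as an R-module, the map B × A' → B', (b, a') ↦ g(b) − f(a'), is surjective, and both A' and B are flat R-modules. Then A is a flat R-module. -/
/-!
The two projections embed `A` into `B × A'` as the kernel of `(b, a') ↦ g b - f a'`, so by the
surjectivity hypothesis `0 → A → B × A' → B' → 0` is exact. Its middle term is flat, and the
kernel of a surjection between flat modules is flat: for an ideal `I`, the map
`I ⊗ A → I ⊗ (B × A')` stays injective because `B'` is flat, and `I ⊗ (B × A') → B × A'` is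
injective because `B × A'` is flat; their composite factors through `I ⊗ A → A`.
-/

open TensorProduct LinearMap

instance Module.Flat.prod {R M N : Type*} [CommRing R] [AddCommGroup M] [Module R M]
    [AddCommGroup N] [Module R N] [Module.Flat R M] [Module.Flat R N] :
    Module.Flat R (M × N) := by
  refine Module.Flat.iff_rTensor_injective'.mpr fun I ↦ ?_
  have hcomm : (prodRight R R R M N).toLinearMap ∘ₗ I.subtype.rTensor (M × N) =
      (I.subtype.rTensor M).prodMap (I.subtype.rTensor N) ∘ₗ (prodRight R R I M N).toLinearMap :=
    TensorProduct.ext' fun i x ↦ by simp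
  have hinj : Function.Injective ((I.subtype.rTensor M).prodMap (I.subtype.rTensor N)) :=
    (Module.Flat.rTensor_preserves_injective_linearMap _ I.injective_subtype).prodMap
      (Module.Flat.rTensor_preserves_injective_linearMap _ I.injective_subtype)
  have := hinj.comp (prodRight R R I M N).injective
  rw [← LinearEquiv.coe_toLinearMap, ← coe_comp, ← hcomm, coe_comp] at this
  exact this.of_comp

theorem Module.Flat.ker_of_surjective {R M N : Type*} [CommRing R]
    [AddCommGroup M] [Module R M] [AddCommGroup N] [Module R N]
    [Module.Flat R M] [Module.Flat R N] (f : M →ₗ[R] N) (hf : Function.Surjective f) :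
    Module.Flat R (ker f) := by
  refine Module.Flat.iff_rTensor_injective'.mpr fun I ↦ ?_
  have hK : Function.Injective ((ker f).subtype.lTensor I) :=
    lTensor_injective_of_exact_of_flat f hf _ (ker f).injective_subtype
      (exact_subtype_ker_map f) I
  have hM : Function.Injective (I.subtype.rTensor M) :=
    Module.Flat.rTensor_preserves_injective_linearMap _ I.injective_subtype
  have hcomm : I.subtype.rTensor M ∘ₗ (ker f).subtype.lTensor I =
      (ker f).subtype.lTensor R ∘ₗ I.subtype.rTensor (ker f) := by
    rw [lTensor_comp_rTensor, rTensor_comp_lTensor]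
  have := hM.comp hK
  rw [← coe_comp, hcomm, coe_comp] at this
  exact this.of_comp

section FiberProduct

variable {R A A' B B' : Type*} [Semiring R] [AddCommMonoid A] [AddCommMonoid A'] [AddCommMonoid B]
  [AddCommGroup B'] [Module R A] [Module R A'] [Module R B] [Module R B']

noncomputable def fiberProductEquivKer (f : A' →ₗ[R] B') (g : B →ₗ[R] B')
    (p₁ : A →ₗ[R] B) (p₂ : A →ₗ[R] A') (hcomm : ∀ a, g (p₁ a) = f (p₂ a))
    (hfib : ∀ b a', g b = f a' → ∃! a, p₁ a = b ∧ p₂ a = a') :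
    A ≃ₗ[R] ker (g ∘ₗ fst R B A' - f ∘ₗ snd R B A') :=
  LinearEquiv.ofBijective ((p₁.prod p₂).codRestrict _ fun a ↦ by simp [hcomm]) <| by
    refine ⟨fun a₁ a₂ h ↦ ?_, fun ⟨⟨b, a'⟩, hx⟩ ↦ ?_⟩
    · simp only [Subtype.ext_iff, codRestrict_apply, prod_apply, Prod.ext_iff] at h
      exact (hfib _ _ (hcomm a₁)).unique ⟨rfl, rfl⟩ ⟨h.1.symm, h.2.symm⟩
    · obtain ⟨a, ⟨rfl, rfl⟩, -⟩ := hfib b a' (sub_eq_zero.mp hx)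
      exact ⟨a, rfl⟩

end FiberProduct

/-- With `A = A' ×_{B'} B` the fiber product of `R`-algebras, `B'` flat over `R`,
`(b, a') ↦ g b - f a'` surjective, and `A'`, `B` flat over `R`, the fiber product `A` is flat
over `R`. -/
theorem fiber_product_flat
    (R A' B B' A : Type*) [CommRing R]
    [CommRing A'] [CommRing B] [CommRing B'] [CommRing A]
    [Algebra R A'] [Algebra R B] [Algebra R B'] [Algebra R A]
    (f : A' →ₐ[R] B') (g : B →ₐ[R] B')
    (p₁ : A →ₐ[R] B) (p₂ : A →ₐ[R] A')
    (hcomm : ∀ a : A, g (p₁ a) = f (p₂ a))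
    (hfib : ∀ (b : B) (a' : A'), g b = f a' → ∃! a : A, p₁ a = b ∧ p₂ a = a')
    [Module.Flat R B'] [Module.Flat R A'] [Module.Flat R B]
    (hsurj : Function.Surjective (fun x : B × A' => g x.1 - f x.2)) :
    Module.Flat R A := by
  have := Module.Flat.ker_of_surjective
    (g.toLinearMap ∘ₗ fst R B A' - f.toLinearMap ∘ₗ snd R B A') hsurj
  exact .of_linearEquiv <| fiberProductEquivKer f.toLinearMap g.toLinearMap p₁.toLinearMap
    p₂.toLinearMap hcomm hfib
end

section
/- Let R be an integrally closed Noetherian domain and I a nonzero reflexive ideal of R (i.e., the natural map I → I** to its double dual is an isomorphism). Then the natural map R → End_R(I) sending r to multiplication by r is an isomorphism of rings. -/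
/-- If `R` is an integrally closed Noetherian domain and `I` a nonzero reflexive
ideal (the evaluation map `I → I**` is bijective), then the natural map `R → End_R(I)`,
`r ↦ (x ↦ r • x)`, is an isomorphism of rings. -/
theorem end_of_reflexive_ideal
    {R : Type*} [CommRing R] [IsDomain R] [IsNoetherianRing R] [IsIntegrallyClosed R]
    (I : Ideal R) (hI : I ≠ ⊥)
    (hrefl : Function.Bijective (Module.Dual.eval R I)) :
    Function.Bijective (algebraMap R (Module.End R I)) := by
  obtain ⟨a, haI, ha0⟩ := Submodule.exists_mem_ne_zero_of_ne_bot hI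
  constructor
  · intro r s hrs
    have := LinearMap.congr_arg (f := algebraMap R (Module.End R I) r)
      (x := (⟨a, haI⟩ : I)) rfl
    have h2 : (algebraMap R (Module.End R I) r) ⟨a, haI⟩ =
        (algebraMap R (Module.End R I) s) ⟨a, haI⟩ := by rw [hrs]
    have h3 : r * a = s * a := by
      have := congr_arg Subtype.val h2
      simpa [Module.algebraMap_end_apply, Algebra.smul_def] using this
    exact mul_right_cancel₀ ha0 h3
  · intro f
    set K := FractionRing R
    have hinj : Function.Injective (algebraMap R K) := IsFractionRing.injective R K
    -- key identity: a * f x = x * f a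
    have key : ∀ x : I, (a : R) * (f x : R) = (x : R) * (f ⟨a, haI⟩ : R) := by
      intro x
      have h1 : f ((a : R) • x) = (a : R) • f x := f.map_smul _ _
      have h2 : (a : R) • x = (x : R) • (⟨a, haI⟩ : I) := by
        ext; simp [mul_comm]
      have h3 : f ((x : R) • ⟨a, haI⟩) = (x : R) • f ⟨a, haI⟩ := f.map_smul _ _
      have := h2 ▸ h1
      have h4 : (a : R) • f x = (x : R) • f ⟨a, haI⟩ := by rw [← this, h3]
      have := congr_arg Subtype.val h4
      simpa [smul_eq_mul] using this
    -- q = f(a)/a in K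
    set b : R := (f ⟨a, haI⟩ : R) with hb
    set q : K := algebraMap R K b / algebraMap R K a with hq
    have haK : algebraMap R K a ≠ 0 := fun h => ha0 (hinj (by simpa using h))
    have hqmul : ∀ x : I, q * algebraMap R K (x : R) = algebraMap R K (f x : R) := by
      intro x
      rw [hq, div_mul_eq_mul_div, div_eq_iff haK]
      rw [← map_mul, ← map_mul, mul_comm (b : R), ← key x, mul_comm]
    -- q stabilizes the image of I in K
    set N : Submodule R K := Submodule.map (Algebra.linearMap R K) I with hN
    have hNne : N ≠ ⊥ := by
      intro h
      have : algebraMap R K a ∈ N := ⟨a, haI, rfl⟩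
      rw [h] at this
      exact haK (by simpa using this)
    have hNfg : N.FG := (IsNoetherian.noetherian I).map _
    have hstab : ∀ n ∈ N, q • n ∈ N := by
      rintro _ ⟨x, hx, rfl⟩
      refine ⟨(f ⟨x, hx⟩ : R), (f ⟨x, hx⟩).2, ?_⟩
      simp only [Algebra.linearMap_apply]
      rw [smul_eq_mul, hqmul ⟨x, hx⟩]
    have hint : IsIntegral R q := isIntegral_of_smul_mem_submodule N hNne hNfg q hstab
    obtain ⟨r, hr⟩ := IsIntegrallyClosed.isIntegral_iff.mp hint
    refine ⟨r, ?_⟩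
    ext x
    have : algebraMap R K (r * (x : R)) = algebraMap R K (f x : R) := by
      rw [map_mul, hr, hqmul]
    have hrx : r * (x : R) = (f x : R) := hinj this
    simpa [Module.algebraMap_end_apply, Algebra.smul_def] using hrx
end

section
/- Let k be a field and let R = k[x,y]/(xy) with the k-algebra involution σ swapping x and y. Then the invariant subring R^σ is generated by x + y as a k-algebra, and the k-algebra homomorphism k[t] → R^σ sending t to x + y is an isomorphism. Moreover, the composition k[t] → R^σ ⊆ R → k[x], where the last map sends y to 0 and x to x, is an isomorphism onto k[x]. -/
open MvPolynomial

namespace TwistedStmt10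

variable (k : Type) [Field k]

/-- The ideal `(xy)` of `k[x,y]`. -/
noncomputable def I : Ideal (MvPolynomial (Fin 2) k) := Ideal.span {X 0 * X 1}

/-- The ring `R = k[x,y]/(xy)`. -/
abbrev R := MvPolynomial (Fin 2) k ⧸ I k

/-- The class of `x` in `R`. -/
noncomputable def x : R k := Ideal.Quotient.mk (I k) (X 0)

/-- The class of `y` in `R`. -/
noncomputable def y : R k := Ideal.Quotient.mk (I k) (X 1)

/-- The involution of `R = k[x,y]/(xy)` swapping `x` and `y`. -/
noncomputable def sigma : R k ≃ₐ[k] R k :=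
  Ideal.quotientEquivAlg (I k) (I k) (renameEquiv k (Equiv.swap (0 : Fin 2) 1)) (by
    rw [I, Ideal.map_span, Set.image_singleton]
    congr 1
    simp [rename_X, mul_comm])

/-- The map `R = k[x,y]/(xy) → k[x]` sending `x ↦ x`, `y ↦ 0`. -/
noncomputable def q : R k →ₐ[k] Polynomial k :=
  Ideal.Quotient.liftₐ (I k) (aeval ![Polynomial.X, 0]) (by
    intro p hp
    rw [I, Ideal.mem_span_singleton] at hp
    obtain ⟨c, rfl⟩ := hp
    simp)

/-! The map `q` is a retraction of `t ↦ x + y`. Modulo `y` every element of `R` is a polynomial in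
`x`, read off by `q`, so the kernel of `q` is `yR`; symmetrically the kernel of `q ∘ σ` is `xR`.
Since `xy = 0`, only `0` is killed by both. For `σ`-invariant `r`, the difference
`r - (q r)(x + y)` is killed by both, hence `r = (q r)(x + y)`. -/

lemma x_mul_y : x k * y k = 0 := by
  rw [x, y, ← map_mul, Ideal.Quotient.eq_zero_iff_mem, I]
  exact Ideal.mem_span_singleton_self _

lemma sigma_x : sigma k (x k) = y k := by
  simp [sigma, x, y]

lemma sigma_y : sigma k (y k) = x k := by
  simp [sigma, x, y]

lemma q_x : q k (x k) = Polynomial.X := by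
  change aeval ![Polynomial.X, 0] (X 0) = _
  simp

lemma q_y : q k (y k) = 0 := by
  change aeval ![Polynomial.X, 0] (X 1) = _
  simp

lemma sigma_aeval_x_add_y (p : Polynomial k) :
    sigma k (Polynomial.aeval (x k + y k) p) = Polynomial.aeval (x k + y k) p := by
  rw [← Polynomial.aeval_algHom_apply, map_add, sigma_x, sigma_y, add_comm]

lemma q_comp_aeval_x_add_y :
    (q k).comp (Polynomial.aeval (x k + y k)) = AlgHom.id k (Polynomial k) :=
  Polynomial.algHom_ext (by simp [q_x, q_y])

lemma sub_aeval_x_q_mem_span_y (r : R k) :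
    r - Polynomial.aeval (x k) (q k r) ∈ Ideal.span {y k} := by
  rw [← Ideal.Quotient.eq]
  suffices (Ideal.Quotient.mkₐ k _).comp ((Polynomial.aeval (x k)).comp (q k)) =
      Ideal.Quotient.mkₐ k (Ideal.span {y k}) from (AlgHom.congr_fun this r).symm
  refine Ideal.Quotient.algHom_ext k (MvPolynomial.algHom_ext fun i => ?_)
  fin_cases i
  · change Ideal.Quotient.mk _ (Polynomial.aeval (x k) (q k (x k))) = Ideal.Quotient.mk _ (x k)
    rw [q_x, Polynomial.aeval_X]
  · change Ideal.Quotient.mk _ (Polynomial.aeval (x k) (q k (y k))) = Ideal.Quotient.mk _ (y k)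
    rw [q_y, map_zero, map_zero, eq_comm, Ideal.Quotient.eq_zero_iff_mem]
    exact Ideal.mem_span_singleton_self _

lemma y_dvd_of_q_eq_zero {r : R k} (hr : q k r = 0) : y k ∣ r := by
  simpa [hr, Ideal.mem_span_singleton] using sub_aeval_x_q_mem_span_y k r

lemma eq_zero_of_q_eq_zero_of_q_sigma_eq_zero {r : R k} (h : q k r = 0)
    (hσ : q k (sigma k r) = 0) : r = 0 := by
  obtain ⟨a, rfl⟩ := y_dvd_of_q_eq_zero k h
  rw [map_mul, sigma_y, map_mul, q_x, mul_eq_zero] at hσ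
  obtain ⟨b, hb⟩ := y_dvd_of_q_eq_zero k (hσ.resolve_left Polynomial.X_ne_zero)
  have ha : a = x k * (sigma k).symm b := by
    rw [← (sigma k).symm_apply_apply a, hb, map_mul, (sigma k).symm_apply_eq.mpr (sigma_x k).symm]
  rw [ha, ← mul_assoc, mul_comm (y k), x_mul_y, zero_mul]

/-- For `R = k[x,y]/(xy)` with involution `σ` swapping `x` and `y`, the
invariant ring `R^σ` is the image of the map `k[t] → R`, `t ↦ x + y`, this map is injective
(so `k[t] ≅ R^σ`), and the composition `k[t] → R^σ ⊆ R → k[x]` (with `x ↦ x`, `y ↦ 0`) is an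
isomorphism. -/
theorem invariants_of_swap :
    Function.Injective (Polynomial.aeval (x k + y k) : Polynomial k →ₐ[k] R k) ∧
    (∀ r : R k, sigma k r = r ↔
      r ∈ (Polynomial.aeval (x k + y k) : Polynomial k →ₐ[k] R k).range) ∧
    Function.Bijective
      ((q k).comp (Polynomial.aeval (x k + y k) : Polynomial k →ₐ[k] R k)) := by
  have q_aeval (p : Polynomial k) : q k (Polynomial.aeval (x k + y k) p) = p :=
    AlgHom.congr_fun (q_comp_aeval_x_add_y k) p
  refine ⟨Function.LeftInverse.injective q_aeval, fun r => ⟨fun hr => ⟨q k r, ?_⟩, ?_⟩, ?_⟩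
  · change Polynomial.aeval (x k + y k) (q k r) = r
    rw [← sub_eq_zero]
    apply eq_zero_of_q_eq_zero_of_q_sigma_eq_zero k
    · rw [map_sub, q_aeval, sub_self]
    · rw [map_sub, sigma_aeval_x_add_y, hr, map_sub, q_aeval, sub_self]
  · rintro ⟨p, rfl⟩
    exact sigma_aeval_x_add_y k p
  · rw [q_comp_aeval_x_add_y]
    exact Function.bijective_id

end TwistedStmt10
end

section
/- Let A → R be a flat ring homomorphism of commutative Noetherian rings and a ∈ R an element such that for every prime ideal p of A, the image of a in R ⊗_A κ(p) is a non-zerodivisor (where κ(p) is the residue field at p). Then R/aR is flat over A. -/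
/-!
Because `A/p ↪ κ(p)` stays injective after the flat base change `A → R`, the fibre hypothesis
makes `a` regular on `R ⊗ A/p` for every prime `p`. A prime filtration of a finitely generated
`A`-module `N` spreads this to regularity on `R ⊗ N`, again by flatness of `R`. Finally, tensoring
`R --a--> R → R/aR → 0` with `0 → I → A → A/I → 0` and chasing the diagram shows that
`R/aR ⊗ I → R/aR` is injective as soon as `a` is regular on `R ⊗ A/I` (this is
`Tor₁(R/aR, A/I) = 0`), which is the ideal criterion for flatness.
-/

open TensorProduct

section BaseChange

variable {A R : Type*} [CommRing A] [Ring R] [Algebra A R] [Module.Flat A R]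
  {N P Q : Type*} [AddCommGroup N] [Module A N] [AddCommGroup P] [Module A P]
  [AddCommGroup Q] [Module A Q] {f : N →ₗ[A] P} {g : P →ₗ[A] Q}

theorem Module.Flat.baseChange_injective (hf : Function.Injective f) :
    Function.Injective (f.baseChange R) := by
  rw [LinearMap.baseChange_eq_ltensor]
  exact lTensor_preserves_injective_linearMap f hf

theorem Module.Flat.baseChange_exact (hfg : Function.Exact f g) :
    Function.Exact (f.baseChange R) (g.baseChange R) := by
  simpa only [LinearMap.baseChange_eq_ltensor] using lTensor_exact R hfg

end BaseChange

section Regularity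

variable {A R : Type*} [CommRing A] [CommRing R] [Algebra A R] {a : R}

theorem isSMulRegular_tensor_of_tmul_one_mem_nonZeroDivisors {B : Type*} [CommRing B]
    [Algebra A B] (ha : a ⊗ₜ[A] (1 : B) ∈ nonZeroDivisors (R ⊗[A] B)) :
    IsSMulRegular (R ⊗[A] B) a := by
  rw [← isSMulRegular_algebraMap_iff (R ⊗[A] B), Algebra.TensorProduct.algebraMap_apply]
  exact (isRegular_iff_mem_nonZeroDivisors.mpr ha).left

variable [Module.Flat A R]

theorem isSMulRegular_tensor_quotient_of_tmul_one_mem_nonZeroDivisors (p : Ideal A) [p.IsPrime]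
    (ha : a ⊗ₜ[A] (1 : p.ResidueField) ∈ nonZeroDivisors (R ⊗[A] p.ResidueField)) :
    IsSMulRegular (R ⊗[A] (A ⧸ p)) a :=
  (isSMulRegular_tensor_of_tmul_one_mem_nonZeroDivisors ha).of_injective _
    (Module.Flat.baseChange_injective
      (f := (IsScalarTower.toAlgHom A (A ⧸ p) p.ResidueField).toLinearMap)
      p.injective_algebraMap_quotient_residueField)

theorem isSMulRegular_tensor_of_finite [IsNoetherianRing A]
    (ha : ∀ p : PrimeSpectrum A, IsSMulRegular (R ⊗[A] (A ⧸ p.asIdeal)) a)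
    (N : Type*) [AddCommGroup N] [Module A N] [Module.Finite A N] :
    IsSMulRegular (R ⊗[A] N) a := by
  induction ‹Module.Finite A N› using
    IsNoetherianRing.induction_on_isQuotientEquivQuotientPrime A with
  | subsingleton N => exact Function.injective_of_subsingleton _
  | quotient N p e => exact ((e.baseChange A R).isSMulRegular_congr a).mpr (ha p)
  | exact N₁ N₂ N₃ f g hf _ hfg h₁ h₃ =>
    exact isSMulRegular_of_range_eq_ker (f := f.baseChange R) (g := g.baseChange R)
      (Module.Flat.baseChange_injective hf) (Module.Flat.baseChange_exact hfg).linearMap_ker_eq.symm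
      h₁ h₃

end Regularity

section Flatness

variable {A R : Type*} [CommRing A] [CommRing R] [Algebra A R]

theorem Ideal.exact_mulLeft_mkₐ_span_singleton (a : R) :
    Function.Exact (LinearMap.mulLeft A a)
      (Ideal.Quotient.mkₐ A (Ideal.span {a})).toLinearMap := by
  intro x
  simp [Ideal.Quotient.eq_zero_iff_mem, Ideal.mem_span_singleton', mul_comm]

theorem LinearMap.rTensor_mulLeft_apply {N : Type*} [AddCommGroup N] [Module A N] (a : R)
    (x : R ⊗[A] N) : (LinearMap.mulLeft A a).rTensor N x = a • x := by
  induction x using TensorProduct.induction_on with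
  | zero => simp
  | tmul r n => rfl
  | add x y hx hy => simp [hx, hy]

variable [Module.Flat A R] {a : R}

theorem lTensor_quotient_span_singleton_injective {N P Q : Type*} [AddCommGroup N] [Module A N]
    [AddCommGroup P] [Module A P] [AddCommGroup Q] [Module A Q]
    {f : N →ₗ[A] P} {g : P →ₗ[A] Q} (hf : Function.Injective f) (hfg : Function.Exact f g)
    (ha : IsSMulRegular (R ⊗[A] Q) a) :
    Function.Injective (f.lTensor (R ⧸ Ideal.span {a})) := by
  set π := (Ideal.Quotient.mkₐ A (Ideal.span {a})).toLinearMap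
  have hπ : Function.Surjective π := Ideal.Quotient.mkₐ_surjective A _
  have hfgR := Module.Flat.baseChange_exact (R := R) hfg
  refine (injective_iff_map_eq_zero _).mpr fun x hx => ?_
  obtain ⟨y, rfl⟩ := LinearMap.rTensor_surjective N hπ x
  have hy : π.rTensor P (f.baseChange R y) = 0 := by
    rw [LinearMap.baseChange_eq_ltensor, ← LinearMap.comp_apply, LinearMap.rTensor_comp_lTensor,
      ← LinearMap.lTensor_comp_rTensor, LinearMap.comp_apply, hx]
  obtain ⟨z, hz⟩ := (rTensor_exact P (Ideal.exact_mulLeft_mkₐ_span_singleton a) hπ _).mp hy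
  rw [LinearMap.rTensor_mulLeft_apply] at hz
  have hgz : g.baseChange R z = 0 :=
    ha.right_eq_zero_of_smul <| by rw [← map_smul, hz, hfgR.apply_apply_eq_zero]
  obtain ⟨w, rfl⟩ := (hfgR z).mp hgz
  have hyw : y = a • w := Module.Flat.baseChange_injective hf <| by rw [map_smul, hz]
  rw [hyw, ← LinearMap.rTensor_mulLeft_apply]
  exact (rTensor_exact N (Ideal.exact_mulLeft_mkₐ_span_singleton a) hπ).apply_apply_eq_zero w

theorem Module.Flat.quotient_span_singleton_of_isSMulRegular
    (ha : ∀ I : Ideal A, IsSMulRegular (R ⊗[A] (A ⧸ I)) a) :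
    Module.Flat A (R ⧸ Ideal.span {a}) :=
  iff_lTensor_injective'.mpr fun I =>
    lTensor_quotient_span_singleton_injective I.injective_subtype (LinearMap.exact_subtype_mkQ I)
      (ha I)

end Flatness

theorem quotient_flat_of_fiberwise_regular_general
    (A R : Type*) [CommRing A] [CommRing R]
    [IsNoetherianRing A]
    [Algebra A R] [Module.Flat A R] (a : R)
    (h : ∀ (p : Ideal A) (_ : p.IsPrime),
      (a ⊗ₜ[A] (1 : IsLocalRing.ResidueField (Localization.AtPrime p))
        : R ⊗[A] IsLocalRing.ResidueField (Localization.AtPrime p)) ∈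
        nonZeroDivisors (R ⊗[A] IsLocalRing.ResidueField (Localization.AtPrime p))) :
    Module.Flat A (R ⧸ Ideal.span {a}) := by
  have hfiber (p : PrimeSpectrum A) : IsSMulRegular (R ⊗[A] (A ⧸ p.asIdeal)) a :=
    isSMulRegular_tensor_quotient_of_tmul_one_mem_nonZeroDivisors p.asIdeal (h _ p.isPrime)
  exact Module.Flat.quotient_span_singleton_of_isSMulRegular fun I =>
    isSMulRegular_tensor_of_finite hfiber (A ⧸ I)

/-- If `A → R` is a flat homomorphism of commutative Noetherian rings and
`a : R` has non-zerodivisor image in every fiber ring `R ⊗_A κ(p)`, then `R/aR` is flat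
over `A`. -/
theorem quotient_flat_of_fiberwise_regular
    (A R : Type*) [CommRing A] [CommRing R]
    [IsNoetherianRing A] [IsNoetherianRing R]
    [Algebra A R] [Module.Flat A R] (a : R)
    (h : ∀ (p : Ideal A) (_ : p.IsPrime),
      (a ⊗ₜ[A] (1 : IsLocalRing.ResidueField (Localization.AtPrime p))
        : R ⊗[A] IsLocalRing.ResidueField (Localization.AtPrime p)) ∈
        nonZeroDivisors (R ⊗[A] IsLocalRing.ResidueField (Localization.AtPrime p))) :
    Module.Flat A (R ⧸ Ideal.span {a}) :=
  quotient_flat_of_fiberwise_regular_general A R a h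
end
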